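/- Let δ be an expansion function on L. Let p ∈ L be a nonzero proper element that is non-nilpotent (pⁿ ≠ 0 for every positive integer n) and satisfies the restricted cancellation law: for all a, c ∈ L, p·a = p·c ≠ 0 implies a = c. Let b ∈ L with p < b. Then b is δ-primary to p if and only if there exists a reduction function φ on L with φ(a) ≤ a² for all a ∈ L such that b is φ-δ-primary to p; in particular, if b is φ₂-δ-primary to p then b is δ-primary to p. -/

import Mathlib

/-- A multiplicative lattice: a complete lattice with a commutative, associative
multiplication that distributes over arbitrary joins and whose greatest element `1`
is a multiplicative identity.  We also bundle the standing assumptions of the paper: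
`L` is compactly generated, `1` is compact, and products of compact elements are
compact. -/
class MultiplicativeLattice (L : Type*) extends CompleteLattice L, CommMonoid L where
  mul_sSup : ∀ (a : L) (s : Set L), a * sSup s = ⨆ x ∈ s, a * x
  one_eq_top : (1 : L) = ⊤
  compactly_generated : ∀ x : L, ∃ s : Set L,
    (∀ y ∈ s, IsCompactElement y) ∧ sSup s = x
  compact_one : IsCompactElement (1 : L)
  compact_mul : ∀ a b : L, IsCompactElement a →
    IsCompactElement b → IsCompactElement (a * b)

variable {L : Type*}

/-- An expansion function on `L`. -/
def IsExpansion [CompleteLattice L] (δ : L → L) : Prop :=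
  (∀ a, a ≤ δ a) ∧ ∀ a b : L, a ≤ b → δ a ≤ δ b

/-- A reduction function on `L`. -/
def IsReduction [CompleteLattice L] (φ : L → L) : Prop :=
  ∀ a, φ a ≤ a

/-- `b` is `φ`-`δ`-primary to `p`. -/
def PhiDeltaPrimaryTo [MultiplicativeLattice L] (φ δ : L → L) (b p : L) : Prop :=
  ∀ x : L, x * b ≤ p → ¬ x * b ≤ φ p → x ≤ δ p

/-- `b` is `δ`-primary to `p`. -/
def DeltaPrimaryTo [MultiplicativeLattice L] (δ : L → L) (b p : L) : Prop :=
  ∀ x : L, x * b ≤ p → x ≤ δ p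

/-- `b` is `φ`-prime to `p`. -/
def PhiPrimeTo [MultiplicativeLattice L] (φ : L → L) (b p : L) : Prop :=
  ∀ x : L, x * b ≤ p → ¬ x * b ≤ φ p → x ≤ p

/-- The radical `√q`: the join of all compact elements some positive power of which
lies below `q`.  This is the expansion function `δ₁`. -/
def mlRadical [MultiplicativeLattice L] (q : L) : L :=
  sSup {x : L | IsCompactElement x ∧ ∃ n : ℕ, 0 < n ∧ x ^ n ≤ q}

/-- The function `φ_ω(q) = ⋀_{n ≥ 1} qⁿ`. -/
def phiOmega [MultiplicativeLattice L] (q : L) : L := ⨅ n : ℕ, q ^ (n + 1)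

/-- The mlResidual `(a : c)`, the join of all `x` with `x * c ≤ a`. -/
def mlResidual [MultiplicativeLattice L] (a c : L) : L := sSup {x : L | x * c ≤ a}

/-! If `p < b`, then `p * b ≤ p` while `p * b ≰ p²`, since `p * b = p * p ≠ ⊥` would cancel to
`b = p`. So when `x * b ≤ p` falls below `φ p ≤ p²`, the element `x ⊔ p` still satisfies
`(x ⊔ p) * b ≤ p` but no longer lies below `φ p`, and `φ`-`δ`-primarity bounds `x ≤ x ⊔ p ≤ δ p`. -/

namespace MultiplicativeLattice

variable [MultiplicativeLattice L]

theorem mul_sup (c a b : L) : c * (a ⊔ b) = c * a ⊔ c * b := by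
  rw [← sSup_pair, mul_sSup, iSup_pair]

theorem mul_le_mul_left {a b : L} (h : a ≤ b) (c : L) : c * a ≤ c * b := by
  rw [← sup_eq_right.2 h, mul_sup]
  exact le_sup_left

theorem mul_le_left (a b : L) : a * b ≤ a := by
  simpa using mul_le_mul_left (le_top.trans_eq one_eq_top.symm : b ≤ 1) a

theorem not_mul_le_sq_of_lt {p b : L} (hp2 : p ^ 2 ≠ ⊥)
    (hcanc : ∀ a c : L, p * a = p * c → p * a ≠ ⊥ → a = c) (hpb : p < b) :
    ¬ p * b ≤ p ^ 2 := by
  intro hle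
  have heq : p * b = p * p := le_antisymm (by rwa [pow_two] at hle)
    (mul_le_mul_left hpb.le p)
  exact hpb.ne (hcanc b p heq (by rwa [heq, ← pow_two])).symm

end MultiplicativeLattice

section

variable [MultiplicativeLattice L] {φ δ : L → L} {b p : L}

theorem DeltaPrimaryTo.phiDeltaPrimaryTo (h : DeltaPrimaryTo δ b p) (φ : L → L) :
    PhiDeltaPrimaryTo φ δ b p :=
  fun x hx _ => h x hx

theorem PhiDeltaPrimaryTo.deltaPrimaryTo (h : PhiDeltaPrimaryTo φ δ b p)
    (hpb : ¬ p * b ≤ φ p) : DeltaPrimaryTo δ b p := by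
  intro x hx
  by_cases hxφ : x * b ≤ φ p
  · have hle : (x ⊔ p) * b ≤ p := by
      rw [mul_comm, MultiplicativeLattice.mul_sup, mul_comm b x, mul_comm b p]
      exact sup_le hx (MultiplicativeLattice.mul_le_left p b)
    have hpb_le : p * b ≤ (x ⊔ p) * b := by
      simpa only [mul_comm _ b] using MultiplicativeLattice.mul_le_mul_left le_sup_right b
    exact le_sup_left.trans (h _ hle fun h' => hpb (hpb_le.trans h'))
  · exact h x hx hxφ

end

theorem deltaPrimary_iff_exists_phi_le_sq_general [MultiplicativeLattice L]
    (δ : L → L)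
    (p : L)
    (hnonnil : ∀ n : ℕ, 0 < n → p ^ n ≠ ⊥)
    (hcanc : ∀ a c : L, p * a = p * c → p * a ≠ ⊥ → a = c)
    (b : L) (hpb : p < b) :
    (DeltaPrimaryTo δ b p ↔
      ∃ φ : L → L, IsReduction φ ∧ (∀ a : L, φ a ≤ a ^ 2) ∧
        PhiDeltaPrimaryTo φ δ b p) ∧
    (PhiDeltaPrimaryTo (fun q => q ^ 2) δ b p → DeltaPrimaryTo δ b p) := by
  have hsq : ¬ p * b ≤ p ^ 2 :=
    MultiplicativeLattice.not_mul_le_sq_of_lt (hnonnil 2 two_pos) hcanc hpb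
  refine ⟨⟨fun hd => ⟨fun _ => ⊥, fun _ => bot_le, fun _ => bot_le, hd.phiDeltaPrimaryTo _⟩, ?_⟩,
    fun h => h.deltaPrimaryTo hsq⟩
  rintro ⟨φ, -, hφ, h⟩
  exact h.deltaPrimaryTo fun hle => hsq (hle.trans (hφ p))

theorem deltaPrimary_iff_exists_phi_le_sq [MultiplicativeLattice L]
    (δ : L → L) (hδ : IsExpansion δ)
    (p : L) (hp0 : p ≠ ⊥) (hp : p < 1)
    (hnonnil : ∀ n : ℕ, 0 < n → p ^ n ≠ ⊥)
    (hcanc : ∀ a c : L, p * a = p * c → p * a ≠ ⊥ → a = c)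
    (b : L) (hpb : p < b) :
    (DeltaPrimaryTo δ b p ↔
      ∃ φ : L → L, IsReduction φ ∧ (∀ a : L, φ a ≤ a ^ 2) ∧
        PhiDeltaPrimaryTo φ δ b p) ∧
    (PhiDeltaPrimaryTo (fun q => q ^ 2) δ b p → DeltaPrimaryTo δ b p) :=
  deltaPrimary_iff_exists_phi_le_sq_general δ p hnonnil hcanc b hpb
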